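/- For a nonexpansive operator T on a Hilbert space with a fixed point, the fixed-point residual of the Halpern iteration satisfies ‖z^k − T(z^k)‖ ≤ 2‖z⁰ − z*‖/(k+1) for every fixed point z* of T. -/
import Mathlib

open RealInnerProductSpace

/-- For a nonexpansive operator `T` on a real Hilbert space with fixed point `z*`, the
fixed-point residual of the Halpern iteration satisfies
`‖z^k − T(z^k)‖ ≤ 2‖z⁰ − z*‖/(k+1)` for all `k ≥ 1`. -/
theorem halpern_residual_rate {H : Type*} [NormedAddCommGroup H] [InnerProductSpace ℝ H]
    (T : H → H) (hT : ∀ x y : H, ‖T x - T y‖ ≤ ‖x - y‖)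
    (zstar : H) (hfix : T zstar = zstar) (z : ℕ → H)
    (hrec : ∀ k : ℕ, z (k + 1) =
      (((k : ℝ) + 1) / ((k : ℝ) + 2)) • T (z k) + (1 / ((k : ℝ) + 2)) • z 0) :
    ∀ k : ℕ, 1 ≤ k → ‖z k - T (z k)‖ ≤ 2 * ‖z 0 - zstar‖ / ((k : ℝ) + 1) := by
  -- cocoercivity of I - T
  have coco : ∀ x y : H,
      ‖(x - T x) - (y - T y)‖ ^ 2 ≤ 2 * ⟪(x - T x) - (y - T y), x - y⟫ := by
    intro x y
    have h := hT x y
    have h2 : ‖T x - T y‖ ^ 2 ≤ ‖x - y‖ ^ 2 := by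
      nlinarith [norm_nonneg (T x - T y), norm_nonneg (x - y)]
    have key : T x - T y = (x - y) - ((x - T x) - (y - T y)) := by abel
    rw [key, norm_sub_sq_real] at h2
    have := real_inner_comm (x - y) ((x - T x) - (y - T y))
    linarith
  -- key inductive estimate
  have key : ∀ k : ℕ, (k : ℝ) / 2 * ‖z k - T (z k)‖ ^ 2 ≤ ⟪z k - T (z k), z 0 - z k⟫ := by
    intro k
    induction k with
    | zero => simp
    | succ k ih =>
      have ht : (0 : ℝ) < (k : ℝ) + 2 := by positivity
      have hstep : z (k + 1) - z k
          = (-(((k : ℝ) + 1) / ((k : ℝ) + 2))) • (z k - T (z k))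
            + (1 / ((k : ℝ) + 2)) • (z 0 - z k) := by
        rw [hrec k]
        match_scalars <;> (field_simp; try ring)
      have hanch : z 0 - z (k + 1)
          = (((k : ℝ) + 1) / ((k : ℝ) + 2)) • ((z 0 - z k) + (z k - T (z k))) := by
        rw [hrec k]
        match_scalars <;> (field_simp; try ring)
      have hc := coco (z (k + 1)) (z k)
      rw [hstep] at hc
      have hinner : ⟪(z (k+1) - T (z (k+1))) - (z k - T (z k)),
          (-(((k : ℝ) + 1) / ((k : ℝ) + 2))) • (z k - T (z k))
            + (1 / ((k : ℝ) + 2)) • (z 0 - z k)⟫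
          = (-(((k : ℝ) + 1) / ((k : ℝ) + 2)))
              * ⟪(z (k+1) - T (z (k+1))) - (z k - T (z k)), z k - T (z k)⟫
            + (1 / ((k : ℝ) + 2))
              * ⟪(z (k+1) - T (z (k+1))) - (z k - T (z k)), z 0 - z k⟫ := by
        rw [inner_add_right, real_inner_smul_right, real_inner_smul_right]
      rw [hinner] at hc
      have hX : ⟪(z (k+1) - T (z (k+1))) - (z k - T (z k)), z k - T (z k)⟫
          = ⟪z (k+1) - T (z (k+1)), z k - T (z k)⟫ - ‖z k - T (z k)‖ ^ 2 := by
        rw [inner_sub_left, real_inner_self_eq_norm_sq]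
      have hY : ⟪(z (k+1) - T (z (k+1))) - (z k - T (z k)), z 0 - z k⟫
          = ⟪z (k+1) - T (z (k+1)), z 0 - z k⟫ - ⟪z k - T (z k), z 0 - z k⟫ :=
        inner_sub_left _ _ _
      have hN : ‖(z (k+1) - T (z (k+1))) - (z k - T (z k))‖ ^ 2
          = ‖z (k+1) - T (z (k+1))‖ ^ 2
            - 2 * ⟪z (k+1) - T (z (k+1)), z k - T (z k)⟫ + ‖z k - T (z k)‖ ^ 2 :=
        norm_sub_sq_real _ _
      rw [hX, hY, hN] at hc
      set a := ⟪z (k+1) - T (z (k+1)), z k - T (z k)⟫ with ha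
      set b := ⟪z (k+1) - T (z (k+1)), z 0 - z k⟫ with hb
      set c := ⟪z k - T (z k), z 0 - z k⟫ with hc2
      set n1 := ‖z k - T (z k)‖ ^ 2 with hn1
      set n2 := ‖z (k+1) - T (z (k+1))‖ ^ 2 with hn2
      -- clear denominators in hc
      have hclear : ((k : ℝ) + 2) * (n2 - 2 * a + n1)
          ≤ 2 * (-((k : ℝ) + 1) * (a - n1) + (b - c)) := by
        have h := mul_le_mul_of_nonneg_left hc (le_of_lt ht)
        have e : ((k : ℝ) + 2) * (2 * (-(((k : ℝ) + 1) / ((k : ℝ) + 2)) * (a - n1)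
            + 1 / ((k : ℝ) + 2) * (b - c)))
            = 2 * (-((k : ℝ) + 1) * (a - n1) + (b - c)) := by
          field_simp
        rw [e] at h
        exact h
      have hba : ((k : ℝ) + 2) / 2 * n2 ≤ b + a := by nlinarith [hclear, ih]
      -- conclude the induction step
      push_cast
      rw [hanch, real_inner_smul_right, inner_add_right, ← hb, ← ha]
      have hcoef : (0 : ℝ) ≤ ((k : ℝ) + 1) / ((k : ℝ) + 2) := by positivity
      have hfin := mul_le_mul_of_nonneg_left hba hcoef
      have heq : ((k : ℝ) + 1) / ((k : ℝ) + 2) * (((k : ℝ) + 2) / 2 * n2)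
          = ((k : ℝ) + 1) / 2 * n2 := by
        field_simp
      rw [heq] at hfin
      linarith
  -- conclusion
  intro k hk
  have hco := coco (z k) zstar
  rw [hfix, sub_self, sub_zero] at hco
  have hkk := key k
  have hcs := real_inner_le_norm (z k - T (z k)) (z 0 - zstar)
  have hsplit : ⟪z k - T (z k), z 0 - zstar⟫
      = ⟪z k - T (z k), z 0 - z k⟫ + ⟪z k - T (z k), z k - zstar⟫ := by
    rw [← inner_add_right]
    congr 1
    abel
  have hmain : ((k : ℝ) + 1) / 2 * ‖z k - T (z k)‖ ^ 2
      ≤ ‖z k - T (z k)‖ * ‖z 0 - zstar‖ := by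
    nlinarith [hco, hkk, hcs, hsplit]
  rw [le_div_iff₀ (by positivity : (0 : ℝ) < (k : ℝ) + 1)]
  rcases (norm_nonneg (z k - T (z k))).eq_or_lt with h0 | h0
  · rw [← h0, zero_mul]
    positivity
  · nlinarith [h0, hmain]
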